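/- Let f : ℝ^p → ℝ be twice continuously differentiable with m·I ⪯ ∇²f(θ) ⪯ M·I for all θ (0 < m ≤ M). Let θ ∈ ℝ^p, and suppose g(θ) ∈ ℝ^p and H(θ) ∈ ℝ^{p×p} satisfy ‖g(θ) − ∇f(θ)‖₂ ≤ γ_g and ‖H(θ) − ∇²f(θ)‖₂ ≤ γ_h ≤ m/2. Set Δθ_nt = −H(θ)⁻¹g(θ) and λ̃(θ)² = g(θ)ᵀH(θ)⁻¹g(θ), and suppose γ_g·√(2/m) ≤ λ̃(θ)/2. Then for every α ≥ 0: f(θ + α·Δθ_nt) ≤ f(θ) − λ̃(θ)²·α·(1/2 − (M/m)·α). In particular, for any κ₁ ∈ (0, 1/2) and any 0 ≤ α ≤ (m/M)·(1/2 − κ₁), one has f(θ + α·Δθ_nt) ≤ f(θ) − κ₁·α·λ̃(θ)². -/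

import Mathlib

/-!
Because `‖H - ∇²f(θ)‖ ≤ m/2`, the noisy Hessian `H` is `m/2`-coercive, hence invertible
(Lax–Milgram), and the Newton step `u = H⁻¹ g` satisfies `(m/2)‖u‖² ≤ ⟪g, u⟫ = λ̃²`. With the
gradient error `γg ‖u‖ ≤ γg √(2/m) λ̃ ≤ λ̃²/2`, the exact slope `⟪∇f(θ), -u⟫` is at most `-λ̃²/2`,
while the curvature bound `∇²f ⪯ M` along the segment adds at most
`(M/2) α² ‖u‖² ≤ (M/m) α² λ̃²` (second-order Taylor bound). The second claim is the first once
`(M/m) α ≤ 1/2 - κ₁`.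
-/

open scoped RealInnerProductSpace

/-- The Hessian of `f`, as the Fréchet derivative of the gradient. -/
noncomputable def hessianOf {p : ℕ} (f : EuclideanSpace ℝ (Fin p) → ℝ)
    (θ : EuclideanSpace ℝ (Fin p)) :
    EuclideanSpace ℝ (Fin p) →L[ℝ] EuclideanSpace ℝ (Fin p) :=
  fderiv ℝ (gradient f) θ

variable {E : Type*} [NormedAddCommGroup E] [InnerProductSpace ℝ E]

theorem le_add_mul_add_sq_of_hasDerivAt {φ ψ ψ' : ℝ → ℝ} {C a : ℝ}
    (hφ : ∀ t, HasDerivAt φ (ψ t) t) (hψ : ∀ t, HasDerivAt ψ (ψ' t) t) (hC : ∀ t, ψ' t ≤ C)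
    (ha : 0 ≤ a) : φ a ≤ φ 0 + a * ψ 0 + C / 2 * a ^ 2 := by
  have hψ_le : ∀ t, 0 ≤ t → ψ t ≤ ψ 0 + C * t := fun t ht => by
    have := image_sub_le_mul_sub_of_deriv_le (fun s => (hψ s).differentiableAt)
      (fun s => (hψ s).deriv ▸ hC s) ht
    linarith
  have hρ : ∀ t, HasDerivAt (fun t => φ t - (t * ψ 0 + C / 2 * t ^ 2))
      (ψ t - (ψ 0 + C * t)) t := fun t => by
    refine ((hφ t).sub (((hasDerivAt_id' t).mul_const (ψ 0)).add
      ((hasDerivAt_pow 2 t).const_mul (C / 2)))).congr_deriv ?_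
    norm_num; ring
  have hρ_diff : Differentiable ℝ (fun t => φ t - (t * ψ 0 + C / 2 * t ^ 2)) :=
    fun t => (hρ t).differentiableAt
  have := (convex_Ici (0 : ℝ)).image_sub_le_mul_sub_of_deriv_le (C := 0)
    hρ_diff.continuous.continuousOn hρ_diff.differentiableOn
    (fun t ht => by
      rw [interior_Ici] at ht
      rw [(hρ t).deriv]
      linarith [hψ_le t (le_of_lt ht)])
    0 Set.self_mem_Ici a ha ha
  linarith

theorem ContinuousLinearMap.isInvertible_of_coercive [CompleteSpace E] {A : E →L[ℝ] E} {c : ℝ}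
    (hc : 0 < c) (hA : ∀ v, c * ‖v‖ ^ 2 ≤ ⟪A v, v⟫) : A.IsInvertible := by
  have hB : IsCoercive ((innerSL ℝ) ∘L A) := ⟨c, hc, fun v => by
    rw [mul_assoc, ← sq]; exact hA v⟩
  refine ⟨hB.continuousLinearEquivOfBilin, ContinuousLinearMap.ext fun v =>
    ext_inner_right ℝ fun w => ?_⟩
  rw [ContinuousLinearEquiv.coe_coe, IsCoercive.continuousLinearEquivOfBilin_apply]; rfl

theorem ContDiff.differentiable_gradient [CompleteSpace E] {f : E → ℝ} (hf : ContDiff ℝ 2 f) :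
    Differentiable ℝ (gradient f) :=
  (InnerProductSpace.toDual ℝ E).symm.differentiable.comp
    ((hf.fderiv_right (m := 1) (by norm_num)).differentiable (by norm_num))

theorem hasDerivAt_add_smul (x v : E) (t : ℝ) : HasDerivAt (fun s : ℝ => x + s • v) v t := by
  simpa using ((hasDerivAt_id t).smul_const v).const_add x

theorem hasDerivAt_comp_add_smul {f : E → ℝ} [CompleteSpace E] {x v : E} {t : ℝ}
    (hf : DifferentiableAt ℝ f (x + t • v)) :
    HasDerivAt (fun s : ℝ => f (x + s • v)) ⟪gradient f (x + t • v), v⟫ t := by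
  rw [inner_gradient_left]
  exact hf.hasFDerivAt.comp_hasDerivAt t (hasDerivAt_add_smul x v t)

theorem hasDerivAt_inner_gradient_comp_add_smul {f : E → ℝ} [CompleteSpace E] {x v : E} {t : ℝ}
    (hf : DifferentiableAt ℝ (gradient f) (x + t • v)) :
    HasDerivAt (fun s : ℝ => ⟪gradient f (x + s • v), v⟫)
      ⟪fderiv ℝ (gradient f) (x + t • v) v, v⟫ t := by
  have h := hf.hasFDerivAt.comp_hasDerivAt t (hasDerivAt_add_smul x v t)
  simpa using h.inner ℝ (hasDerivAt_const t v)

theorem ContDiff.le_add_inner_gradient_add_of_hessian_le [CompleteSpace E] {f : E → ℝ}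
    (hf : ContDiff ℝ 2 f) {x v : E} {M : ℝ}
    (hM : ∀ y, ⟪fderiv ℝ (gradient f) y v, v⟫ ≤ M * ‖v‖ ^ 2) {t : ℝ} (ht : 0 ≤ t) :
    f (x + t • v) ≤ f x + t * ⟪gradient f x, v⟫ + M / 2 * t ^ 2 * ‖v‖ ^ 2 := by
  have h := le_add_mul_add_sq_of_hasDerivAt
    (fun s => hasDerivAt_comp_add_smul (x := x) ((hf.differentiable (by norm_num)) _))
    (fun s => hasDerivAt_inner_gradient_comp_add_smul (x := x) (hf.differentiable_gradient _))
    (fun s => hM _) ht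
  simp only [zero_smul, add_zero] at h
  linarith

theorem ContinuousLinearMap.sub_mul_norm_sq_le_inner_of_norm_sub_le {A B : E →L[ℝ] E} {m γ : ℝ}
    (hAB : ‖A - B‖ ≤ γ) {v : E} (hB : m * ‖v‖ ^ 2 ≤ ⟪B v, v⟫) :
    (m - γ) * ‖v‖ ^ 2 ≤ ⟪A v, v⟫ := by
  have h : ⟪(B - A) v, v⟫ ≤ γ * ‖v‖ ^ 2 :=
    calc ⟪(B - A) v, v⟫ ≤ ‖B - A‖ * ‖v‖ * ‖v‖ :=
          (real_inner_le_norm _ _).trans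
            (mul_le_mul_of_nonneg_right ((B - A).le_opNorm v) (norm_nonneg v))
      _ ≤ γ * ‖v‖ ^ 2 := by
          rw [sq, ← mul_assoc]; gcongr; rwa [norm_sub_rev]
  rw [sub_apply, inner_sub_left] at h
  linarith

theorem half_le_inner_of_norm_sub_le {a b u : E} {γ c ℓ : ℝ} (hab : ‖a - b‖ ≤ γ)
    (hu : ‖u‖ ^ 2 ≤ c * ℓ) (hℓ : 0 ≤ ℓ) (hγ : γ * √c ≤ √ℓ / 2) (ha : ⟪a, u⟫ = ℓ) :
    ℓ / 2 ≤ ⟪b, u⟫ := by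
  have hu' : ‖u‖ ≤ √c * √ℓ := by
    rw [← Real.sqrt_mul' c hℓ]; exact Real.le_sqrt_of_sq_le hu
  have hγ0 : 0 ≤ γ := (norm_nonneg _).trans hab
  have h : ⟪a - b, u⟫ ≤ ℓ / 2 :=
    calc ⟪a - b, u⟫ ≤ γ * ‖u‖ :=
          (real_inner_le_norm _ _).trans (mul_le_mul_of_nonneg_right hab (norm_nonneg u))
      _ ≤ γ * √c * √ℓ := by rw [mul_assoc]; gcongr
      _ ≤ √ℓ / 2 * √ℓ := by gcongr
      _ = ℓ / 2 := by rw [div_mul_eq_mul_div, Real.mul_self_sqrt hℓ]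
  rw [inner_sub_left, ha] at h
  linarith

/-- sufficient decrease of `f` along the noisy Newton direction for any
stepsize, and in particular for stepsizes below the backtracking threshold. -/
theorem noisy_newton_sufficient_decrease {p : ℕ} (f : EuclideanSpace ℝ (Fin p) → ℝ)
    (m M γg γh : ℝ) (hm : 0 < m) (hmM : m ≤ M)
    (hf : ContDiff ℝ 2 f)
    (hconv : ∀ θ' v : EuclideanSpace ℝ (Fin p), m * ‖v‖ ^ 2 ≤ ⟪hessianOf f θ' v, v⟫)
    (hsmooth : ∀ θ' v : EuclideanSpace ℝ (Fin p), ⟪hessianOf f θ' v, v⟫ ≤ M * ‖v‖ ^ 2)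
    (θ : EuclideanSpace ℝ (Fin p))
    (g : EuclideanSpace ℝ (Fin p))
    (H : EuclideanSpace ℝ (Fin p) →L[ℝ] EuclideanSpace ℝ (Fin p))
    (hg : ‖g - gradient f θ‖ ≤ γg) (hH : ‖H - hessianOf f θ‖ ≤ γh)
    (hγhm : γh ≤ m / 2)
    (Δ : EuclideanSpace ℝ (Fin p)) (hΔ : Δ = -(H.inverse g))
    (lam2 : ℝ) (hlam2 : lam2 = ⟪g, H.inverse g⟫)
    (hγg : γg * Real.sqrt (2 / m) ≤ Real.sqrt lam2 / 2) :
    (∀ α : ℝ, 0 ≤ α →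
      f (θ + α • Δ) ≤ f θ - lam2 * α * (1 / 2 - M / m * α)) ∧
    (∀ κ₁ ∈ Set.Ioo (0 : ℝ) (1 / 2), ∀ α : ℝ, 0 ≤ α → α ≤ m / M * (1 / 2 - κ₁) →
      f (θ + α • Δ) ≤ f θ - κ₁ * α * lam2) := by
  have hM : 0 < M := hm.trans_le hmM
  set u := H.inverse g
  have hH_coercive : ∀ v, m / 2 * ‖v‖ ^ 2 ≤ ⟪H v, v⟫ := fun v =>
    (mul_le_mul_of_nonneg_right (by linarith) (by positivity)).trans
      (H.sub_mul_norm_sq_le_inner_of_norm_sub_le hH (hconv θ v))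
  have hHu : H u = g := (H.isInvertible_of_coercive (half_pos hm) hH_coercive).self_apply_inverse g
  have hu_lam : m / 2 * ‖u‖ ^ 2 ≤ lam2 := by
    have := hH_coercive u
    rwa [hHu, ← hlam2] at this
  have hlam0 : 0 ≤ lam2 := le_trans (by positivity) hu_lam
  have hu_norm_sq : ‖u‖ ^ 2 ≤ 2 / m * lam2 := by
    rw [div_mul_eq_mul_div, le_div_iff₀ hm]; linarith
  have hdescent : lam2 / 2 ≤ ⟪gradient f θ, u⟫ :=
    half_le_inner_of_norm_sub_le hg hu_norm_sq hlam0 hγg hlam2.symm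
  have hdecrease : ∀ α : ℝ, 0 ≤ α → f (θ + α • Δ) ≤ f θ - lam2 * α * (1 / 2 - M / m * α) := by
    intro α hα
    calc f (θ + α • Δ) ≤ f θ + α * ⟪gradient f θ, Δ⟫ + M / 2 * α ^ 2 * ‖Δ‖ ^ 2 :=
          hf.le_add_inner_gradient_add_of_hessian_le (fun y => hsmooth y Δ) hα
      _ = f θ - α * ⟪gradient f θ, u⟫ + M / 2 * α ^ 2 * ‖u‖ ^ 2 := by
          rw [hΔ, inner_neg_right, norm_neg]; ring
      _ ≤ f θ - α * (lam2 / 2) + M / 2 * α ^ 2 * (2 / m * lam2) := by gcongr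
      _ = f θ - lam2 * α * (1 / 2 - M / m * α) := by field_simp; ring
  refine ⟨hdecrease, fun κ₁ _ α hα hαle => (hdecrease α hα).trans ?_⟩
  have hstep : M / m * α ≤ 1 / 2 - κ₁ :=
    calc M / m * α ≤ M / m * (m / M * (1 / 2 - κ₁)) := by gcongr
      _ = 1 / 2 - κ₁ := by field_simp
  linarith [mul_le_mul_of_nonneg_left hstep (mul_nonneg hlam0 hα)]
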